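/- Let L ⊣ R be an adjunction between symmetric monoidal categories (𝒞, ⊗, 𝕀) and (𝒟, ⊙, 𝕁), with R lax symmetric monoidal, and suppose: (i) the structure maps 𝕀 → R(𝕁) and R(D) ⊗ R(D) → R(D ⊙ D) are isomorphisms for every comonoid D in 𝒟; (ii) every comonoid in 𝒞 is cocommutative; (iii) for every comonoid D in 𝒟, the adjunction counit LR(D) → D is an epimorphism in 𝒟. Then every comonoid in 𝒟 is cocommutative. -/

import Mathlib

/-!
Under (i), the image `R(D)` of a comonoid `D` is again a comonoid, with comultiplication
`R(D) ⟶ R(D ⊙ D) ≅ R(D) ⊗ R(D)`; the only non-formal point is coassociativity, which is checked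
after composing with `R(D) ⊗ R(D) ⊗ R(D) ⟶ R(D ⊙ D ⊙ D)`, a monomorphism because `Δ` is split
by the counit and `μ` is invertible at `D ⊙ D`. Since `R` is braided, cocommutativity of `R(D)`
(ii) says `R(Δ ≫ β) = R(Δ)`, and naturality of the counit `LR(D) ⟶ D`, an epimorphism by (iii),
gives `Δ ≫ β = Δ`.
-/

open CategoryTheory MonoidalCategory Functor.LaxMonoidal

namespace CategoryTheory

instance ComonObj.isSplitMono_comul {C : Type*} [Category C] [MonoidalCategory C] (X : C)
    [ComonObj X] : IsSplitMono (ComonObj.comul (X := X)) :=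
  .mk' ⟨X ◁ ComonObj.counit ≫ (ρ_ X).hom, by rw [ComonObj.comul_counit_assoc, Iso.inv_hom_id]⟩

theorem Adjunction.eq_of_map_eq_of_epi_counit_app {C D : Type*} [Category C] [Category D]
    {L : C ⥤ D} {R : D ⥤ C} (adj : L ⊣ R) {X Y : D} [Epi (adj.counit.app X)] {f g : X ⟶ Y}
    (h : R.map f = R.map g) : f = g := by
  rw [← cancel_epi (adj.counit.app X)]
  simpa using congr(L.map $h ≫ adj.counit.app Y)

section

variable {C D : Type*} [Category C] [MonoidalCategory C] [Category D] [MonoidalCategory D]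
  (F : C ⥤ D) [F.LaxMonoidal]

theorem inv_ε_whiskerRight_comp_leftUnitor_hom [IsIso (ε F)] (X : C) :
    inv (ε F) ▷ F.obj X ≫ (λ_ (F.obj X)).hom = μ F (𝟙_ C) X ≫ F.map (λ_ X).hom := by
  rw [left_unitality, ← comp_whiskerRight_assoc, IsIso.inv_hom_id, id_whiskerRight,
    Category.id_comp]

theorem whiskerLeft_inv_ε_comp_rightUnitor_hom [IsIso (ε F)] (X : C) :
    F.obj X ◁ inv (ε F) ≫ (ρ_ (F.obj X)).hom = μ F X (𝟙_ C) ≫ F.map (ρ_ X).hom := by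
  rw [right_unitality, ← whiskerLeft_comp_assoc, IsIso.inv_hom_id, whiskerLeft_id,
    Category.id_comp]

theorem mono_μ_of_isSplitMono {X Y : C} (f : X ⟶ Y) [IsSplitMono f] (Z : C) [Mono (μ F Y Z)] :
    Mono (μ F X Z) := by
  have : IsSplitMono (F.map f ▷ F.obj Z) :=
    inferInstanceAs (IsSplitMono ((tensorRight (F.obj Z)).map (F.map f)))
  have : Mono (μ F X Z ≫ F.map (f ▷ Z)) := by
    rw [← μ_natural_left]
    infer_instance
  exact mono_of_mono _ (F.map (f ▷ Z))

noncomputable abbrev comonObjOfIsIso (X : C) [ComonObj X] [IsIso (ε F)] [IsIso (μ F X X)]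
    [Mono (μ F X (X ⊗ X))] : ComonObj (F.obj X) where
  counit := F.map ComonObj.counit ≫ inv (ε F)
  comul := F.map ComonObj.comul ≫ inv (μ F X X)
  counit_comul := by
    rw [← cancel_mono (λ_ _).hom, Iso.inv_hom_id, comp_whiskerRight, Category.assoc,
      Category.assoc, Category.assoc, inv_ε_whiskerRight_comp_leftUnitor_hom,
      μ_natural_left_assoc, IsIso.inv_hom_id_assoc, ← F.map_comp, ← F.map_comp,
      ComonObj.counit_comul_assoc, Iso.inv_hom_id, F.map_id]
  comul_counit := by
    rw [← cancel_mono (ρ_ _).hom, Iso.inv_hom_id, whiskerLeft_comp, Category.assoc,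
      Category.assoc, Category.assoc, whiskerLeft_inv_ε_comp_rightUnitor_hom,
      μ_natural_right_assoc, IsIso.inv_hom_id_assoc, ← F.map_comp, ← F.map_comp,
      ComonObj.comul_counit_assoc, Iso.inv_hom_id, F.map_id]
  comul_assoc := by
    rw [← cancel_mono (F.obj X ◁ μ F X X ≫ μ F X (X ⊗ X))]
    simp only [Category.assoc, whiskerLeft_comp, comp_whiskerRight, ← associativity,
      whiskerLeft_inv_hom'_assoc, inv_hom_whiskerRight'_assoc, μ_natural_left_assoc,
      μ_natural_right, IsIso.inv_hom_id_assoc, ← F.map_comp, ComonObj.comul_assoc]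

end

section

variable {C D : Type*} [Category C] [MonoidalCategory C] [BraidedCategory C] [Category D]
  [MonoidalCategory D] [BraidedCategory D] (F : C ⥤ D) [F.LaxBraided]

theorem map_comp_braiding {X Y Z : C} [IsIso (μ F X Y)] (f : Z ⟶ X ⊗ Y) :
    F.map (f ≫ (β_ X Y).hom) = (F.map f ≫ inv (μ F X Y)) ≫ (β_ _ _).hom ≫ μ F Y X := by
  rw [Category.assoc, ← Functor.LaxBraided.braided, IsIso.inv_hom_id_assoc, F.map_comp]

end

end CategoryTheory

/-- Theorem 2.2 of Péroux–Shipley. Let `L ⊣ R` be an adjunction between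
symmetric monoidal categories with `R` lax symmetric monoidal, such that
(i) the structure maps `𝕀 ⟶ R(𝕁)` and `R(D) ⊗ R(D) ⟶ R(D ⊙ D)` are isomorphisms for every
comonoid `D` in `𝒟`; (ii) every comonoid in `𝒞` is cocommutative; (iii) for every comonoid `D`
in `𝒟` the adjunction counit `LR(D) ⟶ D` is an epimorphism. Then every comonoid in `𝒟` is
cocommutative. -/
theorem comon_cocomm_of_adjunction
    {𝒞 : Type*} [Category 𝒞] [MonoidalCategory 𝒞] [SymmetricCategory 𝒞]
    {𝒟 : Type*} [Category 𝒟] [MonoidalCategory 𝒟] [SymmetricCategory 𝒟]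
    (L : 𝒞 ⥤ 𝒟) (R : 𝒟 ⥤ 𝒞) [R.LaxBraided] (adj : L ⊣ R)
    (h1ε : IsIso (ε R))
    (h1μ : ∀ D : Comon 𝒟, IsIso (μ R D.X D.X))
    (h2 : ∀ M : Comon 𝒞, ComonObj.comul (X := M.X) ≫ (β_ M.X M.X).hom = ComonObj.comul (X := M.X))
    (h3 : ∀ D : Comon 𝒟, Epi (adj.counit.app D.X)) :
    ∀ D : Comon 𝒟, ComonObj.comul (X := D.X) ≫ (β_ D.X D.X).hom = ComonObj.comul (X := D.X) := by
  intro D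
  have : IsIso (μ R D.X D.X) := h1μ D
  have : IsIso (μ R (D.X ⊗ D.X) (D.X ⊗ D.X)) := h1μ (D ⊗ D)
  have : Mono (μ R D.X (D.X ⊗ D.X)) := mono_μ_of_isSplitMono R ComonObj.comul _
  let := comonObjOfIsIso R D.X
  have hRD : (R.map ComonObj.comul ≫ inv (μ R D.X D.X)) ≫ (β_ _ _).hom =
      R.map ComonObj.comul ≫ inv (μ R D.X D.X) := h2 ⟨R.obj D.X⟩
  have : Epi (adj.counit.app D.X) := h3 D
  apply adj.eq_of_map_eq_of_epi_counit_app
  rw [map_comp_braiding, ← Category.assoc, hRD, Category.assoc, IsIso.inv_hom_id,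
    Category.comp_id]
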